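/- arXiv:2205.01985 — 2 statements merged into one kernel-verified Lean document; each statement's English description precedes it below -/
import Mathlib

section
/- Let G=(V,E) be a finite simple undirected graph with β_e > 1 for all e ∈ E and 0 < λ_v ≤ 1 for all v ∈ V, and let the weighted random cluster model have edge parameters q_e = 1 − 1/β_e and vertex weights λ. Define P_SW^Ising = P_{I→R}·P_{R→I} and P_SW^wrc = P_{R→I}·P_{I→R} (matrix products). Then P_SW^Ising is reversible with respect to π_Ising, i.e. π_Ising(σ)·P_SW^Ising(σ,τ) = π_Ising(τ)·P_SW^Ising(τ,σ) for all σ,τ ∈ {0,1}^V, and P_SW^wrc is reversible with respect to π_wrc, i.e. π_wrc(S)·P_SW^wrc(S,S') = π_wrc(S')·P_SW^wrc(S',S) for all S,S' ⊆ E. -/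
open Finset
open scoped Classical

noncomputable section

variable {V : Type*} [Fintype V] [DecidableEq V]

/-- The vertex set of the connected component of `v` in the graph `(V, S)`. -/
def compOf (S : Finset (Sym2 V)) (v : V) : Finset V :=
  Finset.univ.filter fun u => (SimpleGraph.fromEdgeSet (↑S : Set (Sym2 V))).Reachable v u

/-- `κ(V,S)`: the set of vertex sets of connected components of the graph `(V, S)`. -/
def kappa (S : Finset (Sym2 V)) : Finset (Finset V) :=
  Finset.univ.image (compOf S)

/-- `∏_{C ∈ κ(V,S)} (1 + ∏_{u ∈ C} λ_u)`. -/
def clusterProd (S : Finset (Sym2 V)) (lam : V → ℝ) : ℝ :=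
  ∏ C ∈ kappa S, (1 + ∏ u ∈ C, lam u)

/-- Weight of an edge subset `S ⊆ E₀` in the weighted random cluster model. -/
def wtWRC (E₀ : Finset (Sym2 V)) (q : Sym2 V → ℝ) (lam : V → ℝ) (S : Finset (Sym2 V)) : ℝ :=
  (∏ e ∈ S, q e) * (∏ f ∈ E₀ \ S, (1 - q f)) * clusterProd S lam

/-- Partition function of the weighted random cluster model. -/
def ZWRC (E₀ : Finset (Sym2 V)) (q : Sym2 V → ℝ) (lam : V → ℝ) : ℝ :=
  ∑ S ∈ E₀.powerset, wtWRC E₀ q lam S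

/-- The weighted random cluster distribution. -/
def piWRC (E₀ : Finset (Sym2 V)) (q : Sym2 V → ℝ) (lam : V → ℝ) (S : Finset (Sym2 V)) : ℝ :=
  wtWRC E₀ q lam S / ZWRC E₀ q lam

/-- The monochromatic edges of a spin configuration `σ`. -/
def monoEdges (E₀ : Finset (Sym2 V)) (σ : V → Bool) : Finset (Sym2 V) :=
  E₀.filter fun e => (e.map σ).IsDiag

/-- Weight of a spin configuration in the Ising model. -/
def wtIsing (E₀ : Finset (Sym2 V)) (β : Sym2 V → ℝ) (lam : V → ℝ) (σ : V → Bool) : ℝ :=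
  (∏ e ∈ monoEdges E₀ σ, β e) * ∏ v : V, (if σ v then lam v else 1)

/-- Ising partition function. -/
def ZIsing (E₀ : Finset (Sym2 V)) (β : Sym2 V → ℝ) (lam : V → ℝ) : ℝ :=
  ∑ σ : V → Bool, wtIsing E₀ β lam σ

/-- Ising Gibbs distribution. -/
def piIsing (E₀ : Finset (Sym2 V)) (β : Sym2 V → ℝ) (lam : V → ℝ) (σ : V → Bool) : ℝ :=
  wtIsing E₀ β lam σ / ZIsing E₀ β lam

/-- Vertices of odd degree in the graph `(V, S)`. -/
def oddVerts (S : Finset (Sym2 V)) : Finset V :=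
  Finset.univ.filter fun v => Odd (S.filter fun e => v ∈ e).card

/-- Weight of an edge subset in the subgraph-world model. -/
def wtSG (E₀ : Finset (Sym2 V)) (p : Sym2 V → ℝ) (η : V → ℝ) (S : Finset (Sym2 V)) : ℝ :=
  (∏ e ∈ S, p e) * (∏ f ∈ E₀ \ S, (1 - p f)) * ∏ v ∈ oddVerts S, η v

/-- Subgraph-world partition function. -/
def ZSG (E₀ : Finset (Sym2 V)) (p : Sym2 V → ℝ) (η : V → ℝ) : ℝ :=
  ∑ S ∈ E₀.powerset, wtSG E₀ p η S

/-- Subgraph-world distribution. -/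
def piSG (E₀ : Finset (Sym2 V)) (p : Sym2 V → ℝ) (η : V → ℝ) (S : Finset (Sym2 V)) : ℝ :=
  wtSG E₀ p η S / ZSG E₀ p η

/-- The transformation `P_{I→R}` from Ising configurations to edge subsets. -/
def PIR (E₀ : Finset (Sym2 V)) (β : Sym2 V → ℝ) (σ : V → Bool) (S : Finset (Sym2 V)) : ℝ :=
  if S ⊆ monoEdges E₀ σ then
    (∏ e ∈ S, (1 - (β e)⁻¹)) * ∏ f ∈ monoEdges E₀ σ \ S, (β f)⁻¹
  else 0

/-- The transformation `P_{R→I}` from edge subsets to Ising configurations. -/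
def PRI (E₀ : Finset (Sym2 V)) (lam : V → ℝ) (S : Finset (Sym2 V)) (σ : V → Bool) : ℝ :=
  if S ⊆ monoEdges E₀ σ then
    ∏ C ∈ kappa S, ((∏ v ∈ C, if σ v then lam v else 1) / (1 + ∏ v ∈ C, lam v))
  else 0

/-- Swendsen-Wang dynamics for the Ising model: `P_{I→R} ⬝ P_{R→I}`. -/
def PSWIsing (E₀ : Finset (Sym2 V)) (β : Sym2 V → ℝ) (lam : V → ℝ) (σ τ : V → Bool) : ℝ :=
  ∑ S ∈ E₀.powerset, PIR E₀ β σ S * PRI E₀ lam S τ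

/-- Swendsen-Wang dynamics for the weighted random cluster model: `P_{R→I} ⬝ P_{I→R}`. -/
def PSWwrc (E₀ : Finset (Sym2 V)) (β : Sym2 V → ℝ) (lam : V → ℝ)
    (S S' : Finset (Sym2 V)) : ℝ :=
  ∑ σ : V → Bool, PRI E₀ lam S σ * PIR E₀ β σ S'

/-- Lazy edge-flipping (Metropolis) dynamics for a distribution `pi` on subsets of `E₀`. -/
def PEF (E₀ : Finset (Sym2 V)) (pi : Finset (Sym2 V) → ℝ) (x y : Finset (Sym2 V)) : ℝ :=
  if x = y then
    1 - (1 / (2 * (E₀.card : ℝ))) * ∑ e ∈ E₀, min 1 (pi (symmDiff x {e}) / pi x)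
  else if (symmDiff x y).card = 1 then
    (1 / (2 * (E₀.card : ℝ))) * min 1 (pi y / pi x)
  else 0

/-- Variance of `f` with respect to a distribution `pi` supported on `states`. -/
def varOn {α : Type*} (states : Finset α) (pi f : α → ℝ) : ℝ :=
  (∑ x ∈ states, pi x * f x ^ 2) - (∑ x ∈ states, pi x * f x) ^ 2

/-- Dirichlet form of a Markov kernel `P` with stationary distribution `pi` on `states`. -/
def dirichletOn {α : Type*} (states : Finset α) (pi : α → ℝ) (P : α → α → ℝ) (f : α → ℝ) : ℝ :=
  ∑ x ∈ states, pi x * f x * (f x - ∑ y ∈ states, P x y * f y)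

/-- Spectral gap of a reversible Markov kernel `P` with stationary distribution `pi`. -/
def gapOn {α : Type*} (states : Finset α) (pi : α → ℝ) (P : α → α → ℝ) : ℝ :=
  sInf ((fun f : α → ℝ => dirichletOn states pi P f / varOn states pi f) ''
    {f | varOn states pi f ≠ 0})

/-- Total variation distance between two distributions on `states`. -/
def dTV {α : Type*} (states : Finset α) (μ ν : α → ℝ) : ℝ :=
  (1 / 2) * ∑ z ∈ states, |μ z - ν z|

/-- `t`-step transition probabilities of the Markov kernel `P` on state space `states`. -/
def kpow {α : Type*} (states : Finset α) (P : α → α → ℝ) : ℕ → α → α → ℝ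
  | 0 => fun x y => if x = y then 1 else 0
  | (t + 1) => fun x y => ∑ z ∈ states, P x z * kpow states P t z y

/-!
Both Swendsen–Wang chains pass through the Edwards–Sokal coupling. If `S ⊆ M(σ)`, then
`wt_wrc(S) · P_{R→I}(S, σ)` and `∏_{e ∈ E} β_e⁻¹ · wt_Ising(σ) · P_{I→R}(σ, S)` both equal
`∏_{e ∈ E} β_e⁻¹ · ∏_{e ∈ S} (β_e - 1) · ∏_v λ_v^{σ(v)}`; otherwise both vanish. Summing over `σ`
(colourings constant on the clusters of `S` factor over the clusters) and over `S` gives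
`Z_wrc = ∏_{e ∈ E} β_e⁻¹ · Z_Ising`, hence the balance identity
`π_wrc(S) P_{R→I}(S, σ) = π_Ising(σ) P_{I→R}(σ, S)`, and both products `P Q` and `Q P` of two
kernels in such balance are reversible.
-/

theorem reversible_comp_of_balance {R α β : Type*} [CommSemiring R] (s : Finset β)
    (πa : α → R) (πb : β → R) (P : α → β → R) (Q : β → α → R)
    (h : ∀ a, ∀ b ∈ s, πa a * P a b = πb b * Q b a) (a a' : α) :
    πa a * ∑ b ∈ s, P a b * Q b a' = πa a' * ∑ b ∈ s, P a' b * Q b a := by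
  simp only [mul_sum]
  refine sum_congr rfl fun b hb => ?_
  calc πa a * (P a b * Q b a') = πb b * Q b a * Q b a' := by rw [← mul_assoc, h a b hb]
    _ = πb b * Q b a' * Q b a := by ring
    _ = πa a' * (P a' b * Q b a) := by rw [← h a' b hb, mul_assoc]

theorem SimpleGraph.Reachable.eq_of_forall_adj {W γ : Type*} {G : SimpleGraph W} {f : W → γ}
    (hf : ∀ u v, G.Adj u v → f u = f v) {u v : W} (h : G.Reachable u v) : f u = f v := by
  obtain ⟨w⟩ := h
  induction w with
  | nil => rfl
  | cons hadj _ ih => exact (hf _ _ hadj).trans ih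

theorem SimpleGraph.sum_filter_reachable_prod_eq_prod_sum {W γ R : Type*} [Fintype W]
    [DecidableEq W] [Fintype γ] [DecidableEq γ] [CommSemiring R] (H : SimpleGraph W)
    [Fintype H.ConnectedComponent] [DecidableEq H.ConnectedComponent]
    [DecidablePred fun σ : W → γ => ∀ u v, H.Reachable u v → σ u = σ v] (L : W → γ → R) :
    ∑ σ ∈ univ.filter (fun σ : W → γ => ∀ u v, H.Reachable u v → σ u = σ v), ∏ v, L v (σ v) =
      ∏ K : H.ConnectedComponent, ∑ b, ∏ v ∈ univ.filter (H.connectedComponentMk · = K), L v b := by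
  have hmk : Function.Surjective H.connectedComponentMk := Quot.mk_surjective
  have hfilter : univ.filter (fun σ : W → γ => ∀ u v, H.Reachable u v → σ u = σ v) =
      univ.image (fun c => c ∘ H.connectedComponentMk) := by
    ext σ
    simp only [mem_filter, mem_univ, true_and, mem_image]
    constructor
    · intro hσ
      refine ⟨σ ∘ Function.surjInv hmk, funext fun v => ?_⟩
      exact hσ _ _ (ConnectedComponent.exact (Function.surjInv_eq hmk _))
    · rintro ⟨c, rfl⟩ u v huv
      exact congrArg c (ConnectedComponent.sound huv)
  rw [hfilter, sum_image fun c _ c' _ h => hmk.injective_comp_right h, Fintype.prod_sum]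
  refine sum_congr rfl fun c _ => ?_
  rw [← prod_fiberwise univ H.connectedComponentMk]
  refine prod_congr rfl fun K _ => prod_congr rfl fun v hv => ?_
  rw [Function.comp_apply, (mem_filter.1 hv).2]

local notation "graphOf " S => SimpleGraph.fromEdgeSet (SetLike.coe S)

theorem subset_monoEdges_iff {V : Type*} {E₀ S : Finset (Sym2 V)} {σ : V → Bool} :
    S ⊆ monoEdges E₀ σ ↔ S ⊆ E₀ ∧ ∀ u v, (graphOf S).Reachable u v → σ u = σ v := by
  simp only [monoEdges, subset_iff, mem_filter, imp_and, forall_and]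
  refine and_congr_right fun _ => ⟨fun h u v huv => ?_, fun h e he => ?_⟩
  · refine huv.eq_of_forall_adj fun a b hab => ?_
    rw [SimpleGraph.fromEdgeSet_adj] at hab
    simpa using h _ hab.1
  · induction e using Sym2.ind with
    | _ a b =>
      rw [Sym2.map_mk, Sym2.mk_isDiag_iff]
      rcases eq_or_ne a b with rfl | hab
      · rfl
      · exact h a b ((SimpleGraph.fromEdgeSet_adj _).2 ⟨he, hab⟩).reachable

theorem sum_PIR {V : Type*} [DecidableEq V] (E₀ : Finset (Sym2 V)) (β : Sym2 V → ℝ)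
    (σ : V → Bool) :
    ∑ S ∈ E₀.powerset, PIR E₀ β σ S = 1 := by
  have hM : monoEdges E₀ σ ⊆ E₀ := filter_subset _ _
  rw [← sum_subset (powerset_mono.2 hM) fun S _ hS => by
    rw [PIR, if_neg fun h => hS (mem_powerset.2 h)]]
  calc ∑ S ∈ (monoEdges E₀ σ).powerset, PIR E₀ β σ S
      = ∑ S ∈ (monoEdges E₀ σ).powerset,
          (∏ e ∈ S, (1 - (β e)⁻¹)) * ∏ f ∈ monoEdges E₀ σ \ S, (β f)⁻¹ :=
        sum_congr rfl fun S hS => if_pos (mem_powerset.1 hS)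
    _ = ∏ e ∈ monoEdges E₀ σ, ((1 - (β e)⁻¹) + (β e)⁻¹) := (prod_add _ _ _).symm
    _ = 1 := by simp

theorem compOf_eq_filter (S : Finset (Sym2 V)) (v : V) :
    compOf S v =
      univ.filter ((graphOf S).connectedComponentMk · = (graphOf S).connectedComponentMk v) := by
  ext u
  simp only [compOf, mem_filter, mem_univ, true_and, SimpleGraph.ConnectedComponent.eq]
  exact ⟨fun h => h.symm, fun h => h.symm⟩

theorem prod_kappa_eq_prod_connectedComponent {M : Type*} [CommMonoid M] (S : Finset (Sym2 V))
    (f : Finset V → M) :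
    ∏ C ∈ kappa S, f C = ∏ K : (graphOf S).ConnectedComponent,
      f (univ.filter ((graphOf S).connectedComponentMk · = K)) := by
  set H := graphOf S
  have hmk : Function.Surjective H.connectedComponentMk := Quot.mk_surjective
  have hinj : Function.Injective fun K : H.ConnectedComponent =>
      univ.filter (H.connectedComponentMk · = K) := by
    intro K K' h
    obtain ⟨v, rfl⟩ := hmk K
    simpa using (Finset.ext_iff.1 h v)
  have hkappa : kappa S = univ.image fun K : H.ConnectedComponent =>
      univ.filter (H.connectedComponentMk · = K) := by
    rw [kappa, funext (compOf_eq_filter S), ← image_univ_of_surjective hmk, image_image]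
    rfl
  rw [hkappa, prod_image fun K _ K' _ h => hinj h]

theorem prod_kappa_prod_eq_prod {M : Type*} [CommMonoid M] (S : Finset (Sym2 V)) (g : V → M) :
    ∏ C ∈ kappa S, ∏ v ∈ C, g v = ∏ v, g v := by
  rw [prod_kappa_eq_prod_connectedComponent]
  exact prod_fiberwise univ _ g

theorem sum_ite_subset_monoEdges {R : Type*} [CommSemiring R] {E₀ S : Finset (Sym2 V)}
    (hS : S ⊆ E₀) (L : V → Bool → R) :
    ∑ σ : V → Bool, (if S ⊆ monoEdges E₀ σ then ∏ v, L v (σ v) else 0) =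
      ∏ C ∈ kappa S, ∑ b, ∏ v ∈ C, L v b := by
  simp only [subset_monoEdges_iff, hS, true_and]
  rw [← sum_filter, SimpleGraph.sum_filter_reachable_prod_eq_prod_sum,
    prod_kappa_eq_prod_connectedComponent S fun C => ∑ b, ∏ v ∈ C, L v b]

theorem clusterProd_pos (S : Finset (Sym2 V)) {lam : V → ℝ} (hlam : ∀ v, 0 ≤ lam v) :
    0 < clusterProd S lam :=
  prod_pos fun _ _ => add_pos_of_pos_of_nonneg one_pos (prod_nonneg fun v _ => hlam v)

theorem PRI_eq_div_of_subset {E₀ S : Finset (Sym2 V)} {lam : V → ℝ} {σ : V → Bool}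
    (h : S ⊆ monoEdges E₀ σ) :
    PRI E₀ lam S σ = (∏ v, if σ v then lam v else 1) / clusterProd S lam := by
  rw [PRI, if_pos h, prod_div_distrib, prod_kappa_prod_eq_prod, clusterProd]

theorem sum_PRI {E₀ S : Finset (Sym2 V)} (hS : S ⊆ E₀) {lam : V → ℝ} (hlam : ∀ v, 0 ≤ lam v) :
    ∑ σ : V → Bool, PRI E₀ lam S σ = 1 := by
  have hPRI : ∀ σ, PRI E₀ lam S σ =
      (if S ⊆ monoEdges E₀ σ then ∏ v, if σ v then lam v else 1 else 0) / clusterProd S lam := by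
    intro σ
    split_ifs with h
    · exact PRI_eq_div_of_subset h
    · rw [PRI, if_neg h, zero_div]
  simp only [hPRI, ← sum_div, sum_ite_subset_monoEdges hS fun v b => if b then lam v else 1,
    Fintype.sum_bool, if_true, Bool.false_eq_true, if_false, prod_const_one]
  have hcp : ∏ C ∈ kappa S, (∏ v ∈ C, lam v + 1) = clusterProd S lam :=
    prod_congr rfl fun _ _ => add_comm _ _
  rw [hcp, div_self (clusterProd_pos S hlam).ne']

theorem wtWRC_mul_PRI_eq {E₀ : Finset (Sym2 V)} {β : Sym2 V → ℝ} {lam : V → ℝ}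
    (hβ : ∀ e ∈ E₀, β e ≠ 0) (hlam : ∀ v, 0 ≤ lam v) (S : Finset (Sym2 V)) (σ : V → Bool) :
    wtWRC E₀ (fun e => 1 - (β e)⁻¹) lam S * PRI E₀ lam S σ =
      (∏ e ∈ E₀, (β e)⁻¹) * (wtIsing E₀ β lam σ * PIR E₀ β σ S) := by
  by_cases h : S ⊆ monoEdges E₀ σ
  · rw [wtWRC, wtIsing, PIR, if_pos h, PRI_eq_div_of_subset h]
    set M := monoEdges E₀ σ
    have hM : M ⊆ E₀ := filter_subset _ _
    have hsplit : ∏ f ∈ E₀ \ S, (β f)⁻¹ = (∏ f ∈ E₀ \ M, (β f)⁻¹) * ∏ f ∈ M \ S, (β f)⁻¹ := by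
      rw [← prod_union (sdiff_disjoint.mono_right sdiff_subset), sdiff_union_sdiff_cancel hM h]
    have hcancel : (∏ e ∈ E₀, (β e)⁻¹) * ∏ e ∈ M, β e = ∏ f ∈ E₀ \ M, (β f)⁻¹ := by
      rw [← prod_sdiff hM, mul_assoc, ← prod_mul_distrib,
        prod_eq_one fun e he => inv_mul_cancel₀ (hβ e (hM he)), mul_one]
    simp only [sub_sub_cancel]
    rw [hsplit, ← hcancel]
    field_simp [(clusterProd_pos S hlam).ne']
  · rw [PRI, PIR, if_neg h, if_neg h, mul_zero, mul_zero, mul_zero]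

theorem ZWRC_eq_prod_inv_mul_ZIsing {E₀ : Finset (Sym2 V)} {β : Sym2 V → ℝ} {lam : V → ℝ}
    (hβ : ∀ e ∈ E₀, β e ≠ 0) (hlam : ∀ v, 0 ≤ lam v) :
    ZWRC E₀ (fun e => 1 - (β e)⁻¹) lam = (∏ e ∈ E₀, (β e)⁻¹) * ZIsing E₀ β lam := by
  calc ZWRC E₀ (fun e => 1 - (β e)⁻¹) lam
      = ∑ S ∈ E₀.powerset, wtWRC E₀ (fun e => 1 - (β e)⁻¹) lam S * ∑ σ, PRI E₀ lam S σ :=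
        sum_congr rfl fun S hS => by rw [sum_PRI (mem_powerset.1 hS) hlam, mul_one]
    _ = ∑ σ, (∏ e ∈ E₀, (β e)⁻¹) * (wtIsing E₀ β lam σ * ∑ S ∈ E₀.powerset, PIR E₀ β σ S) := by
        simp only [mul_sum, wtWRC_mul_PRI_eq hβ hlam]
        exact sum_comm
    _ = (∏ e ∈ E₀, (β e)⁻¹) * ZIsing E₀ β lam := by simp only [sum_PIR, mul_one, ZIsing, mul_sum]

theorem piWRC_mul_PRI_eq_piIsing_mul_PIR {E₀ : Finset (Sym2 V)} {β : Sym2 V → ℝ} {lam : V → ℝ}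
    (hβ : ∀ e ∈ E₀, β e ≠ 0) (hlam : ∀ v, 0 ≤ lam v) (S : Finset (Sym2 V)) (σ : V → Bool) :
    piWRC E₀ (fun e => 1 - (β e)⁻¹) lam S * PRI E₀ lam S σ =
      piIsing E₀ β lam σ * PIR E₀ β σ S := by
  have hc : ∏ e ∈ E₀, (β e)⁻¹ ≠ 0 := prod_ne_zero_iff.2 fun e he => inv_ne_zero (hβ e he)
  rw [piWRC, piIsing, ZWRC_eq_prod_inv_mul_ZIsing hβ hlam, div_mul_eq_mul_div,
    wtWRC_mul_PRI_eq hβ hlam, div_mul_eq_mul_div, mul_div_mul_left _ _ hc]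

/-- Reversibility of the Swendsen-Wang dynamics: `P_SW^Ising` is reversible with respect to
`π_Ising` and `P_SW^wrc` is reversible with respect to `π_wrc`, with `q_e = 1 − 1/β_e`. -/
theorem sw_reversible {V : Type*} [Fintype V] [DecidableEq V]
    (G : SimpleGraph V) [DecidableRel G.Adj]
    (β : Sym2 V → ℝ) (lam : V → ℝ)
    (hβ : ∀ e ∈ G.edgeFinset, 1 < β e)
    (hlam : ∀ v : V, 0 < lam v ∧ lam v ≤ 1) :
    (∀ σ τ : V → Bool,
      piIsing G.edgeFinset β lam σ * PSWIsing G.edgeFinset β lam σ τ =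
        piIsing G.edgeFinset β lam τ * PSWIsing G.edgeFinset β lam τ σ) ∧
    (∀ S ∈ G.edgeFinset.powerset, ∀ S' ∈ G.edgeFinset.powerset,
      piWRC G.edgeFinset (fun e => 1 - (β e)⁻¹) lam S * PSWwrc G.edgeFinset β lam S S' =
        piWRC G.edgeFinset (fun e => 1 - (β e)⁻¹) lam S' * PSWwrc G.edgeFinset β lam S' S) := by
  have hβ₀ : ∀ e ∈ G.edgeFinset, β e ≠ 0 := fun e he => (one_pos.trans (hβ e he)).ne'
  have hbalance := piWRC_mul_PRI_eq_piIsing_mul_PIR hβ₀ fun v => (hlam v).1.le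
  exact ⟨reversible_comp_of_balance _ _ _ _ _ fun σ S _ => (hbalance S σ).symm,
    fun S _ S' _ => reversible_comp_of_balance _ _ _ _ _ (fun S σ _ => hbalance S σ) S S'⟩

end
end

section
/- Let G=(V,E) be a finite simple undirected graph and let λ_v ∈ [0,1) for all v ∈ V. Set η_v = (1−λ_v)/(1+λ_v) for each v ∈ V. Then ∏_{C∈κ(V,E)} (1 + ∏_{u∈C} λ_u) = (∏_{v∈V}(1+λ_v)) · (1/2)^{|E|} · Σ_{E'⊆E} ∏_{u∈odd(E')} η_u, where κ(V,E) is the set of vertex sets of connected components of G and odd(E') is the set of vertices of odd degree in the graph (V,E'). -/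
open Finset
open scoped Classical

noncomputable section

variable {V : Type*} [Fintype V] [DecidableEq V]

/-! Both sides equal `∑_A ∏_{v ∈ A} λ_v`, where `A` ranges over the vertex sets that no edge
leaves, i.e. the unions of connected components. For the left side this is the expansion of the
product over components. For the right side, `(1 + λ_v) η_v^[v odd in E'] = 1 + (-1)^{deg v} λ_v`
with `deg` taken in `E'`, so expanding the product over vertices and double counting vertex–edge
incidences gives `∑_A λ^A ∏_{e ∈ E'} (-1)^{|e ∩ A|}`; summing over `E' ⊆ E` turns the inner
product into `∏_{e ∈ E} (1 + (-1)^{|e ∩ A|})`, which is `2^{|E|}` if no edge leaves `A` and `0`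
otherwise. -/

def IsEdgeClosed (S : Finset (Sym2 V)) (A : Finset V) : Prop :=
  ∀ ⦃u v : V⦄, s(u, v) ∈ S → (u ∈ A ↔ v ∈ A)

theorem prod_one_add_prod_fiber_eq_sum_saturated {α ι R : Type*} [Fintype α] [DecidableEq ι]
    [CommSemiring R] (c : α → ι) (f : α → R) :
    ∏ i ∈ univ.image c, (1 + ∏ a with c a = i, f a) =
      ∑ A ∈ univ.powerset.filter (fun A => ∀ a b, c a = c b → (a ∈ A ↔ b ∈ A)),
        ∏ a ∈ A, f a := by
  rw [prod_one_add]
  refine sum_nbij' (fun T => ({a | c a ∈ T} : Finset α)) (fun A => A.image c) ?_ ?_ ?_ ?_ ?_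
  · intro T _
    simp only [mem_filter, mem_powerset, mem_univ, true_and, subset_univ]
    exact fun a b hab => by rw [hab]
  · intro A _
    exact mem_powerset.mpr (image_subset_image (subset_univ A))
  · intro T hT
    ext i
    simp only [mem_image, mem_filter, mem_univ, true_and]
    refine ⟨fun ⟨a, ha, hai⟩ => hai ▸ ha, fun hi => ?_⟩
    obtain ⟨a, -, rfl⟩ := mem_image.mp (mem_powerset.mp hT hi)
    exact ⟨a, hi, rfl⟩
  · intro A hA
    ext a
    simp only [mem_filter, mem_univ, true_and, mem_powerset, mem_image] at hA ⊢
    constructor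
    · rintro ⟨b, hb, hba⟩
      exact (hA.2 b a hba).mp hb
    · exact fun ha => ⟨a, ha, rfl⟩
  · intro T _
    exact prod_fiberwise_eq_prod_filter univ T c f

theorem mem_compOf {S : Finset (Sym2 V)} {u v : V} :
    u ∈ compOf S v ↔ (SimpleGraph.fromEdgeSet (↑S : Set (Sym2 V))).Reachable v u := by
  simp [compOf]

theorem compOf_eq_compOf_iff {S : Finset (Sym2 V)} {u v : V} :
    compOf S u = compOf S v ↔ (SimpleGraph.fromEdgeSet (↑S : Set (Sym2 V))).Reachable u v := by
  refine ⟨fun h => mem_compOf.mp (h ▸ mem_compOf.mpr .rfl), fun h => ?_⟩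
  ext w
  simp only [mem_compOf]
  exact ⟨h.symm.trans, h.trans⟩

theorem isEdgeClosed_iff_compOf {S : Finset (Sym2 V)} {A : Finset V} :
    IsEdgeClosed S A ↔ ∀ u v, compOf S u = compOf S v → (u ∈ A ↔ v ∈ A) := by
  simp only [compOf_eq_compOf_iff, SimpleGraph.reachable_fromEdgeSet_eq_reflTransGen_toRel]
  refine ⟨fun hA u v huv => ?_, fun hA u v huv => hA u v (.single (by simpa using huv))⟩
  induction huv with
  | refl => rfl
  | tail _ hvw ih => exact ih.trans (hA (by simpa using hvw))

theorem prod_kappa_one_add_eq_sum_isEdgeClosed {R : Type*} [CommSemiring R]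
    (S : Finset (Sym2 V)) (f : V → R) :
    ∏ C ∈ kappa S, (1 + ∏ u ∈ C, f u) =
      ∑ A ∈ univ.powerset.filter (IsEdgeClosed S), ∏ u ∈ A, f u := by
  have hfiber : ∀ C ∈ kappa S, ({u | compOf S u = C} : Finset V) = C := by
    intro C hC
    obtain ⟨v, -, rfl⟩ := mem_image.mp hC
    ext u
    simp [compOf_eq_compOf_iff, mem_compOf, SimpleGraph.reachable_comm]
  calc ∏ C ∈ kappa S, (1 + ∏ u ∈ C, f u)
      = ∏ C ∈ univ.image (compOf S), (1 + ∏ u with compOf S u = C, f u) :=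
        prod_congr rfl fun C hC => by rw [hfiber C hC]
    _ = _ := by
        rw [prod_one_add_prod_fiber_eq_sum_saturated]
        congr 1
        ext A
        simp only [mem_filter, isEdgeClosed_iff_compOf]

theorem prod_one_add_mul_prod_oddVerts {R : Type*} [CommRing R] (S : Finset (Sym2 V))
    (lam η : V → R) (hη : ∀ v, (1 + lam v) * η v = 1 - lam v) :
    (∏ v, (1 + lam v)) * ∏ v ∈ oddVerts S, η v =
      ∏ v, (1 + (-1) ^ #{e ∈ S | v ∈ e} * lam v) := by
  rw [oddVerts, prod_filter, ← prod_mul_distrib]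
  refine prod_congr rfl fun v _ => ?_
  rcases Nat.even_or_odd #{e ∈ S | v ∈ e} with hev | hodd
  · rw [if_neg (Nat.not_odd_iff_even.mpr hev), hev.neg_one_pow, mul_one, one_mul]
  · rw [if_pos hodd, hodd.neg_one_pow, hη]
    ring

theorem prod_one_add_neg_one_pow_card_mul {R : Type*} [CommRing R] (S : Finset (Sym2 V))
    (lam : V → R) :
    ∏ v, (1 + (-1) ^ #{e ∈ S | v ∈ e} * lam v) =
      ∑ A ∈ univ.powerset, (∏ v ∈ A, lam v) * ∏ e ∈ S, (-1) ^ #{v ∈ A | v ∈ e} := by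
  rw [prod_one_add]
  refine sum_congr rfl fun A _ => ?_
  have hdouble := prod_prod_bipartiteAbove_eq_prod_prod_bipartiteBelow (· ∈ ·) (s := A) (t := S)
    (fun _ _ => (-1 : R))
  simp only [prod_const, bipartiteAbove, bipartiteBelow] at hdouble
  rw [prod_mul_distrib, hdouble, mul_comm]

theorem one_add_neg_one_pow_card_filter_mem {α R : Type*} [DecidableEq α] [CommRing R]
    {A : Finset α} {u v : α} (huv : u ≠ v) :
    1 + (-1 : R) ^ #{x ∈ A | x ∈ s(u, v)} = if (u ∈ A ↔ v ∈ A) then 2 else 0 := by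
  have hfilter : {x ∈ A | x ∈ s(u, v)} = ({u, v} : Finset α).filter (· ∈ A) := by
    ext x
    simp only [mem_filter, Sym2.mem_iff, mem_insert, mem_singleton]
    tauto
  rw [hfilter, filter_insert, filter_singleton]
  by_cases hu : u ∈ A <;> by_cases hv : v ∈ A <;> simp [hu, hv, huv] <;> norm_num

theorem sum_powerset_prod_neg_one_pow_card {α R : Type*} [DecidableEq α] [CommRing R]
    {S : Finset (Sym2 α)} (hS : ∀ e ∈ S, ¬ e.IsDiag) (A : Finset α) :
    ∑ T ∈ S.powerset, ∏ e ∈ T, (-1 : R) ^ #{v ∈ A | v ∈ e} =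
      if IsEdgeClosed S A then 2 ^ #S else 0 := by
  rw [← prod_one_add]
  split_ifs with hA
  · rw [← prod_const]
    refine prod_congr rfl fun e he => ?_
    induction e using Sym2.ind with
    | _ u v => rw [one_add_neg_one_pow_card_filter_mem (hS _ he <| Sym2.mk_isDiag_iff.mpr ·),
        if_pos (hA he)]
  · obtain ⟨u, v, he, huv⟩ : ∃ u v, s(u, v) ∈ S ∧ ¬(u ∈ A ↔ v ∈ A) := by
      simpa [IsEdgeClosed] using hA
    refine prod_eq_zero he ?_
    rw [one_add_neg_one_pow_card_filter_mem (hS _ he <| Sym2.mk_isDiag_iff.mpr ·), if_neg huv]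

theorem prod_one_add_mul_sum_powerset_prod_oddVerts {R : Type*} [CommRing R]
    {S : Finset (Sym2 V)} (hS : ∀ e ∈ S, ¬ e.IsDiag) (lam η : V → R)
    (hη : ∀ v, (1 + lam v) * η v = 1 - lam v) :
    (∏ v, (1 + lam v)) * ∑ T ∈ S.powerset, ∏ v ∈ oddVerts T, η v =
      2 ^ #S * ∑ A ∈ univ.powerset.filter (IsEdgeClosed S), ∏ v ∈ A, lam v := by
  simp_rw [mul_sum, prod_one_add_mul_prod_oddVerts _ lam η hη,
    prod_one_add_neg_one_pow_card_mul]
  rw [sum_comm, sum_filter]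
  refine sum_congr rfl fun A _ => ?_
  rw [← mul_sum, sum_powerset_prod_neg_one_pow_card hS]
  split_ifs <;> ring

/-- Holographic counting identity:
`∏_{C∈κ(V,E)} (1 + ∏_{u∈C} λ_u) = (∏_v (1+λ_v)) (1/2)^{|E|} Σ_{E'⊆E} ∏_{u∈odd(E')} η_u`
where `η_v = (1−λ_v)/(1+λ_v)`. -/
theorem cluster_counting {V : Type*} [Fintype V] [DecidableEq V]
    (G : SimpleGraph V) [DecidableRel G.Adj]
    (lam : V → ℝ) (η : V → ℝ)
    (hlam : ∀ v : V, 0 ≤ lam v ∧ lam v < 1)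
    (hη : ∀ v : V, η v = (1 - lam v) / (1 + lam v)) :
    clusterProd G.edgeFinset lam =
      (∏ v : V, (1 + lam v)) * (1 / 2 : ℝ) ^ G.edgeFinset.card *
        ∑ E' ∈ G.edgeFinset.powerset, ∏ u ∈ oddVerts E', η u := by
  have hS : ∀ e ∈ G.edgeFinset, ¬ e.IsDiag := fun e he =>
    G.not_isDiag_of_mem_edgeSet (SimpleGraph.mem_edgeFinset.mp he)
  have hη' : ∀ v, (1 + lam v) * η v = 1 - lam v := fun v => by
    rw [hη, mul_div_cancel₀ _ (by linarith [(hlam v).1])]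
  rw [clusterProd, prod_kappa_one_add_eq_sum_isEdgeClosed, mul_right_comm,
    prod_one_add_mul_sum_powerset_prod_oddVerts hS lam η hη', mul_right_comm, ← mul_pow]
  norm_num

end
end
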